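/- If f, g, h are functions on a finite probabilistic team with =(f,g), g ≈* h, and the images satisfy |h(X)| ≥ |f(X)|, then |f(X)| = |g(X)| = |h(X)| and =(g,f) holds. -/

import Mathlib

/-- The multiset of marginal probabilities of `f` over its image. -/
noncomputable def margMultiset {X A : Type*} [Fintype X] [DecidableEq A]
    (P : X → ℝ) (f : X → A) : Multiset ℝ :=
  (Finset.univ.image f).val.map
    (fun a => ∑ s ∈ Finset.univ.filter (fun s => f s = a), P s)

/-
Project the graph `{(f s, g s)}` of the pair onto either factor. `=(f,g)` says that the projection
to the first factor is injective on it, so `|f(X)|` is the size of the graph and bounds `|g(X)|`;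
`≈*` forces `|g(X)| = |h(X)| ≥ |f(X)|`, so the projection to the second factor is injective too,
which is `=(g,f)`.
-/

open Finset

section ImagePair

variable {X A B : Type*} [DecidableEq A] [DecidableEq B]

theorem card_image_pair_eq_card_image_left_iff (s : Finset X) (f : X → A) (g : X → B) :
    #(s.image fun x => (f x, g x)) = #(s.image f) ↔
      ∀ x ∈ s, ∀ y ∈ s, f x = f y → g x = g y := by
  have hfst : s.image f = (s.image fun x => (f x, g x)).image Prod.fst := by
    rw [image_image]; rfl
  rw [hfst, eq_comm, card_image_iff]
  simp only [Set.InjOn, coe_image, Set.mem_image, mem_coe]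
  constructor
  · intro hinj x hx y hy hxy
    exact congrArg Prod.snd (hinj ⟨x, hx, rfl⟩ ⟨y, hy, rfl⟩ hxy)
  · rintro hdep _ ⟨x, hx, rfl⟩ _ ⟨y, hy, rfl⟩ hxy
    exact Prod.ext hxy (hdep x hx y hy hxy)

theorem card_image_pair_eq_card_image_right_iff (s : Finset X) (f : X → A) (g : X → B) :
    #(s.image fun x => (f x, g x)) = #(s.image g) ↔
      ∀ x ∈ s, ∀ y ∈ s, g x = g y → f x = f y := by
  have hswap : (s.image fun x => (g x, f x)) = (s.image fun x => (f x, g x)).image Prod.swap := by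
    rw [image_image]; rfl
  rw [← card_image_pair_eq_card_image_left_iff s g f, hswap,
    card_image_of_injective _ Prod.swap_injective]

theorem card_image_right_le_card_image_pair (s : Finset X) (f : X → A) (g : X → B) :
    #(s.image g) ≤ #(s.image fun x => (f x, g x)) := by
  have hsnd : s.image g = (s.image fun x => (f x, g x)).image Prod.snd := by
    rw [image_image]; rfl
  exact hsnd ▸ card_image_le

end ImagePair

theorem card_margMultiset {X A : Type*} [Fintype X] [DecidableEq A] (P : X → ℝ) (f : X → A) :
    Multiset.card (margMultiset P f) = #(univ.image f) := by
  simp only [margMultiset, Multiset.card_map, card_val]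

theorem stmt_15_general {X A B C : Type*} [Fintype X]
    [DecidableEq A] [DecidableEq B] [DecidableEq C]
    (f : X → A) (g : X → B) (h : X → C)
    (P : X → ℝ)
    (hfd : ∀ s s', f s = f s' → g s = g s')
    (hmde : margMultiset P g = margMultiset P h)
    (hcard : (Finset.univ.image f).card ≤ (Finset.univ.image h).card) :
    (Finset.univ.image f).card = (Finset.univ.image g).card ∧
    (Finset.univ.image g).card = (Finset.univ.image h).card ∧
    (∀ s s', g s = g s' → f s = f s') := by
  have hgh : #(univ.image g) = #(univ.image h) := by
    simpa only [card_margMultiset] using congrArg Multiset.card hmde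
  have hpair_f := (card_image_pair_eq_card_image_left_iff univ f g).2 fun x _ y _ => hfd x y
  have hg_le := card_image_right_le_card_image_pair univ f g
  have hfg : #(univ.image f) = #(univ.image g) := by omega
  have hdep := (card_image_pair_eq_card_image_right_iff univ f g).1 (by omega)
  exact ⟨hfg, hgh, fun x y => hdep x (mem_univ x) y (mem_univ y)⟩

theorem stmt_15 {X A B C : Type*} [Fintype X] [Nonempty X]
    [DecidableEq A] [DecidableEq B] [DecidableEq C]
    (f : X → A) (g : X → B) (h : X → C)
    (P : X → ℝ) (hP : ∀ s, 0 < P s) (hsum : ∑ s, P s = 1)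
    (hfd : ∀ s s', f s = f s' → g s = g s')
    (hmde : margMultiset P g = margMultiset P h)
    (hcard : (Finset.univ.image f).card ≤ (Finset.univ.image h).card) :
    (Finset.univ.image f).card = (Finset.univ.image g).card ∧
    (Finset.univ.image g).card = (Finset.univ.image h).card ∧
    (∀ s s', g s = g s' → f s = f s') :=
  stmt_15_general f g h P hfd hmde hcard
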